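/- The YM bracket of a purely longitudinal mode with an arbitrary mode is given by: for modes (k₁,k₁) and (ξ₂,k₂), [k₁, ξ₂]_YM = −( (k₂·k₂)ξ₂ − ((ξ₂·k₂))k₂ ) + ( ((k₁+k₂)·(k₁+k₂))ξ₂ − (ξ₂·(k₁+k₂))(k₁+k₂) ). -/

import Mathlib

namespace Stmt5

variable {V : Type*} [AddCommGroup V] [Module ℝ V]

/-- The YM bracket of modes (polarization part). -/
def ymMode (B : LinearMap.BilinForm ℝ V) (p q : V × V) : V × V :=
  ((2 * B p.1 q.2) • q.1 - (2 * B q.1 p.2) • p.1 + B p.1 q.1 • (p.2 - q.2)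
    + B p.1 p.2 • q.1 - B q.1 q.2 • p.1, p.2 + q.2)

/-- The YM bracket of a purely longitudinal mode `(k₁,k₁)` with an arbitrary mode
`(ξ₂,k₂)`:
`[k₁,ξ₂]_YM = −((k₂·k₂)ξ₂ − (ξ₂·k₂)k₂) + ((k₁+k₂)²ξ₂ − (ξ₂·(k₁+k₂))(k₁+k₂))`. -/
theorem ym_longitudinal (B : LinearMap.BilinForm ℝ V) (hB : B.IsSymm)
    (k₁ ξ₂ k₂ : V) :
    (ymMode B (k₁, k₁) (ξ₂, k₂)).1
      = -(B k₂ k₂ • ξ₂ - B ξ₂ k₂ • k₂)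
        + (B (k₁ + k₂) (k₁ + k₂) • ξ₂ - B ξ₂ (k₁ + k₂) • (k₁ + k₂)) := by
  have hξ : B ξ₂ k₁ = B k₁ ξ₂ := hB.eq ξ₂ k₁
  have hk : B k₂ k₁ = B k₁ k₂ := hB.eq k₂ k₁
  simp only [ymMode, map_add, LinearMap.add_apply, hξ, hk]
  module

end Stmt5
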